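/- Let W be a positive semidefinite operator on H_{I1} ⊗ H_{O1} ⊗ H_{I2} ⊗ H_{O2} satisfying W = (1/d_{O2}) (Tr_{O2} W) ⊗ I_{O2}. Let {M_{1,j} ⊗ ρ_{k}} be instrument elements for party 1 and let party 2 measure POVM {M_{2,j'}} and prepare state σ_{k'} with conditional probability Q(k'|j'). Then the joint distribution P(j,k,j',k') = Q(k'|j') P1(k|j) Tr[W (M_{1,j} ⊗ ρ_k ⊗ M_{2,j'} ⊗ σ_{k'})] satisfies P(k'|j',j,k) = Q(k'|j') whenever the conditioning event has positive probability; i.e., the Markov condition (J1,K1) - J2 - K2 holds. -/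

import Mathlib

open Matrix Finset
open scoped ComplexOrder

/-- Four-fold tensor (Kronecker) product of matrices, with right-associated index. -/
noncomputable def tens4 {α β γ δ : Type*} (A : Matrix α α ℂ) (B : Matrix β β ℂ)
    (C : Matrix γ γ ℂ) (D : Matrix δ δ ℂ) :
    Matrix (α × β × γ × δ) (α × β × γ × δ) ℂ :=
  fun x y => A x.1 y.1 * B x.2.1 y.2.1 * C x.2.2.1 y.2.2.1 * D x.2.2.2 y.2.2.2

/-!
Since `W = (1/d) Tr_{O2} W ⊗ I`, the trace `Tr[W (A ⊗ B ⊗ C ⊗ σ)]` factors as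
`(1/d) Tr[Tr_{O2} W (A ⊗ B ⊗ C)] · Tr σ = (1/d) Tr[Tr_{O2} W (A ⊗ B ⊗ C)]`, which does not depend
on the preparation `σ`. Hence `P(j,k,j',k') = Q(k'|j') R(j,k,j')` for some `R`, and both the
conditional law of `K2` and the Markov property follow from `∑ₖ' Q(k'|j') = 1`.
-/

open scoped Kronecker

namespace Matrix

theorem trace_submatrix_equiv {m n R : Type*} [Fintype m] [Fintype n] [AddCommMonoid R]
    (A : Matrix n n R) (e : m ≃ n) : trace (A.submatrix e e) = trace A :=
  e.sum_comp fun i => A i i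

theorem trace_kronecker_one_mul_kronecker {ι δ R : Type*} [Fintype ι] [Fintype δ]
    [DecidableEq δ] [CommSemiring R] (V T : Matrix ι ι R) (S : Matrix δ δ R) :
    trace ((V ⊗ₖ (1 : Matrix δ δ R)) * (T ⊗ₖ S)) = trace (V * T) * trace S := by
  rw [← mul_kronecker_mul, trace_kronecker, Matrix.one_mul]

end Matrix

section LastFactor

variable {α β γ δ : Type*}

def splitLast : α × β × γ × δ ≃ (α × β × γ) × δ where
  toFun x := ((x.1, x.2.1, x.2.2.1), x.2.2.2)
  invFun y := (y.1.1, y.1.2.1, y.1.2.2, y.2)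
  left_inv _ := rfl
  right_inv _ := rfl

/-- The partial trace `Tr_{O2}`. -/
def traceLast [Fintype δ] (W : Matrix (α × β × γ × δ) (α × β × γ × δ) ℂ) :
    Matrix (α × β × γ) (α × β × γ) ℂ :=
  fun x y => ∑ l, W (splitLast.symm (x, l)) (splitLast.symm (y, l))

theorem tens4_submatrix_splitLast (A : Matrix α α ℂ) (B : Matrix β β ℂ) (C : Matrix γ γ ℂ)
    (D : Matrix δ δ ℂ) :
    (tens4 A B C D).submatrix splitLast.symm splitLast.symm = (A ⊗ₖ (B ⊗ₖ C)) ⊗ₖ D := by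
  ext ⟨⟨_, _, _⟩, _⟩ ⟨⟨_, _, _⟩, _⟩
  simp only [tens4, splitLast, submatrix_apply, kroneckerMap_apply, Equiv.coe_fn_symm_mk,
    mul_assoc]

variable [Fintype δ] [DecidableEq δ]

theorem submatrix_splitLast_eq_traceLast_kronecker_one
    (W : Matrix (α × β × γ × δ) (α × β × γ × δ) ℂ) (c : ℂ)
    (hW : ∀ (x y : α × β × γ) (l l' : δ),
      W (x.1, x.2.1, x.2.2, l) (y.1, y.2.1, y.2.2, l')
        = (if l = l' then (1 : ℂ) else 0) *
          (c * ∑ l'', W (x.1, x.2.1, x.2.2, l'') (y.1, y.2.1, y.2.2, l''))) :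
    W.submatrix splitLast.symm splitLast.symm = (c • traceLast W) ⊗ₖ (1 : Matrix δ δ ℂ) := by
  ext ⟨x, l⟩ ⟨y, l'⟩
  rw [submatrix_apply, kroneckerMap_apply, one_apply, Matrix.smul_apply, smul_eq_mul, mul_comm]
  exact hW x y l l'

theorem trace_mul_tens4_of_eq_traceLast_kronecker_one [Fintype α] [Fintype β] [Fintype γ]
    (W : Matrix (α × β × γ × δ) (α × β × γ × δ) ℂ) (c : ℂ)
    (hW : ∀ (x y : α × β × γ) (l l' : δ),
      W (x.1, x.2.1, x.2.2, l) (y.1, y.2.1, y.2.2, l')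
        = (if l = l' then (1 : ℂ) else 0) *
          (c * ∑ l'', W (x.1, x.2.1, x.2.2, l'') (y.1, y.2.1, y.2.2, l'')))
    (A : Matrix α α ℂ) (B : Matrix β β ℂ) (C : Matrix γ γ ℂ) (D : Matrix δ δ ℂ) :
    (W * tens4 A B C D).trace = (c • traceLast W * (A ⊗ₖ (B ⊗ₖ C))).trace * D.trace := by
  rw [← trace_submatrix_equiv _ (splitLast.symm : (α × β × γ) × δ ≃ _),
    ← submatrix_mul_equiv W _ _ splitLast.symm _,
    submatrix_splitLast_eq_traceLast_kronecker_one W c hW, tens4_submatrix_splitLast,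
    trace_kronecker_one_mul_kronecker]

end LastFactor

section ProductForm

variable {J K J' K' : Type*} [Fintype K'] {P : J → K → J' → K' → ℝ} {Q : K' → J' → ℝ}
  {R : J → K → J' → ℝ}

theorem sum_eq_of_eq_mul (hQ : ∀ j', ∑ k', Q k' j' = 1)
    (hP : ∀ j k j' k', P j k j' k' = Q k' j' * R j k j') (j : J) (k : K) (j' : J') :
    ∑ k', P j k j' k' = R j k j' := by
  simp only [hP, ← Finset.sum_mul, hQ, one_mul]

theorem div_sum_eq_of_eq_mul (hQ : ∀ j', ∑ k', Q k' j' = 1)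
    (hP : ∀ j k j' k', P j k j' k' = Q k' j' * R j k j') (j : J) (k : K) (j' : J') (k' : K')
    (hpos : 0 < ∑ k'', P j k j' k'') :
    P j k j' k' / ∑ k'', P j k j' k'' = Q k' j' := by
  rw [sum_eq_of_eq_mul hQ hP] at hpos ⊢
  rw [hP, mul_div_assoc, div_self hpos.ne', mul_one]

theorem markov_of_eq_mul [Fintype J] [Fintype K] (hQ : ∀ j', ∑ k', Q k' j' = 1)
    (hP : ∀ j k j' k', P j k j' k' = Q k' j' * R j k j') (j : J) (k : K) (j' : J') (k' : K') :
    P j k j' k' * (∑ j'', ∑ k'', ∑ k2, P j'' k'' j' k2)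
      = (∑ k2, P j k j' k2) * (∑ j'', ∑ k'', P j'' k'' j' k') := by
  simp only [sum_eq_of_eq_mul hQ hP]
  simp only [hP, ← Finset.mul_sum]
  ring

end ProductForm

theorem stmt8_general {a b c d : ℕ} {J K J' K' : Type*}
    [Fintype J] [Fintype K] [Fintype K']
    (W : Matrix (Fin a × Fin b × Fin c × Fin d) (Fin a × Fin b × Fin c × Fin d) ℂ)
    (hWstruct : ∀ (x y : Fin a × Fin b × Fin c) (l l' : Fin d),
      W (x.1, x.2.1, x.2.2, l) (y.1, y.2.1, y.2.2, l')
        = (if l = l' then (1 : ℂ) else 0) *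
          ((d : ℂ)⁻¹ * ∑ l'' : Fin d,
            W (x.1, x.2.1, x.2.2, l'') (y.1, y.2.1, y.2.2, l'')))
    (M1 : J → Matrix (Fin a) (Fin a) ℂ)
    (ρ : K → Matrix (Fin b) (Fin b) ℂ)
    (M2 : J' → Matrix (Fin c) (Fin c) ℂ)
    (σ : K' → Matrix (Fin d) (Fin d) ℂ)
    (hσtr : ∀ k', (σ k').trace = 1)
    (P1 : K → J → ℝ)
    (Q : K' → J' → ℝ) (hQsum : ∀ j', ∑ k', Q k' j' = 1)
    (P : J → K → J' → K' → ℝ)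
    (hP : ∀ j k j' k', P j k j' k'
      = Q k' j' * P1 k j * ((W * tens4 (M1 j) (ρ k) (M2 j') (σ k')).trace).re) :
    (∀ (j : J) (k : K) (j' : J') (k' : K'),
      0 < ∑ k'' : K', P j k j' k'' →
      P j k j' k' / (∑ k'' : K', P j k j' k'') = Q k' j') ∧
    (∀ (j : J) (k : K) (j' : J') (k' : K'),
      P j k j' k' * (∑ j'' : J, ∑ k'' : K, ∑ k2 : K', P j'' k'' j' k2)
        = (∑ k2 : K', P j k j' k2)
          * (∑ j'' : J, ∑ k'' : K, P j'' k'' j' k')) := by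
  have hfactor : ∀ j k j' k', P j k j' k' = Q k' j' *
      (P1 k j * (((d : ℂ)⁻¹ • traceLast W * (M1 j ⊗ₖ (ρ k ⊗ₖ M2 j'))).trace).re) := by
    intro j k j' k'
    rw [hP, trace_mul_tens4_of_eq_traceLast_kronecker_one W _ hWstruct, hσtr, mul_one,
      mul_assoc]
  exact ⟨div_sum_eq_of_eq_mul hQsum hfactor, markov_of_eq_mul hQsum hfactor⟩

/-- If a positive semidefinite process matrix `W` satisfies
`W = (1/d_{O2}) (Tr_{O2} W) ⊗ I_{O2}` (stated entrywise), then for party 1's instrument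
elements `M₁ⱼ ⊗ ρₖ` and party 2's POVM `{M₂ⱼ'}` with preparations `σₖ'` distributed as
`Q(k'|j')`, the joint distribution
`P(j,k,j',k') = Q(k'|j') P1(k|j) Tr[W (M₁ⱼ ⊗ ρₖ ⊗ M₂ⱼ' ⊗ σₖ')]` satisfies
`P(k'|j',j,k) = Q(k'|j')` whenever the conditioning event has positive probability, and
the Markov condition `(J1,K1) - J2 - K2` holds. -/
theorem stmt8 {a b c d : ℕ} {J K J' K' : Type*}
    [Fintype J] [Fintype K] [Fintype J'] [Fintype K']
    (W : Matrix (Fin a × Fin b × Fin c × Fin d) (Fin a × Fin b × Fin c × Fin d) ℂ)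
    (hW : W.PosSemidef)
    (hWstruct : ∀ (x y : Fin a × Fin b × Fin c) (l l' : Fin d),
      W (x.1, x.2.1, x.2.2, l) (y.1, y.2.1, y.2.2, l')
        = (if l = l' then (1 : ℂ) else 0) *
          ((d : ℂ)⁻¹ * ∑ l'' : Fin d,
            W (x.1, x.2.1, x.2.2, l'') (y.1, y.2.1, y.2.2, l'')))
    (M1 : J → Matrix (Fin a) (Fin a) ℂ)
    (hM1 : ∀ j, (M1 j).PosSemidef) (hM1sum : ∑ j, M1 j = 1)
    (ρ : K → Matrix (Fin b) (Fin b) ℂ)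
    (hρ : ∀ k, (ρ k).PosSemidef) (hρtr : ∀ k, (ρ k).trace = 1)
    (M2 : J' → Matrix (Fin c) (Fin c) ℂ)
    (hM2 : ∀ j', (M2 j').PosSemidef) (hM2sum : ∑ j', M2 j' = 1)
    (σ : K' → Matrix (Fin d) (Fin d) ℂ)
    (hσ : ∀ k', (σ k').PosSemidef) (hσtr : ∀ k', (σ k').trace = 1)
    (P1 : K → J → ℝ) (hP1 : ∀ k j, 0 ≤ P1 k j) (hP1sum : ∀ j, ∑ k, P1 k j = 1)
    (Q : K' → J' → ℝ) (hQ : ∀ k' j', 0 ≤ Q k' j') (hQsum : ∀ j', ∑ k', Q k' j' = 1)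
    (P : J → K → J' → K' → ℝ)
    (hP : ∀ j k j' k', P j k j' k'
      = Q k' j' * P1 k j * ((W * tens4 (M1 j) (ρ k) (M2 j') (σ k')).trace).re) :
    (∀ (j : J) (k : K) (j' : J') (k' : K'),
      0 < ∑ k'' : K', P j k j' k'' →
      P j k j' k' / (∑ k'' : K', P j k j' k'') = Q k' j') ∧
    (∀ (j : J) (k : K) (j' : J') (k' : K'),
      P j k j' k' * (∑ j'' : J, ∑ k'' : K, ∑ k2 : K', P j'' k'' j' k2)
        = (∑ k2 : K', P j k j' k2)
          * (∑ j'' : J, ∑ k'' : K, P j'' k'' j' k')) :=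
  stmt8_general W hWstruct M1 ρ M2 σ hσtr P1 Q hQsum P hP
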